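/- Let B ⊆ P be a principal coalgebra C-extension of Doi–Koppinen type: H a Hopf algebra with bijective antipode, P a right H-comodule algebra, C a right H-module coalgebra, D a right H-module, π: C → D a right H-linear coalgebra map, e ∈ C group-like with ρ(p) = Σ p₍₀₎ ⊗ e·p₍₁₎, and the canonical Galois map a right P-module homomorphism for the diagonal right action on P ⊗ C. Then with A = P^{co D}_ē and X = C^{co D}_ē, the canonical Galois map restricts to an isomorphism A ⊗_B A ≅ P □_D X. -/

import Mathlib

open TensorProduct

variable (k H C D P : Type) [Field k]
  [Ring H] [HopfAlgebra k H]
  [AddCommGroup C] [Module k C] [Coalgebra k C]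
  [AddCommGroup D] [Module k D] [Coalgebra k D]
  [Ring P] [Algebra k P]

/-- The canonical Galois map `P ⊗ P → P ⊗ C`, `p ⊗ q ↦ p·ρ(q)`. -/
noncomputable def canMap (ρ : P →ₗ[k] P ⊗[k] C) : P ⊗[k] P →ₗ[k] P ⊗[k] C :=
  LinearMap.rTensor C (LinearMap.mul' k P) ∘ₗ
    (TensorProduct.assoc k P P C).symm.toLinearMap ∘ₗ LinearMap.lTensor P ρ

/-- The coinvariants `B = P^{co C}`. -/
def coinv (ρ : P →ₗ[k] P ⊗[k] C) : Set P :=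
  {b : P | ∀ p : P, ρ (b * p) = LinearMap.rTensor C (LinearMap.mulLeft k b) (ρ p)}

/-- The kernel of `P ⊗ₖ P → P ⊗_B P`. -/
def galRel (ρ : P →ₗ[k] P ⊗[k] C) : Submodule k (P ⊗[k] P) :=
  Submodule.span k
    {w : P ⊗[k] P | ∃ p q b : P, b ∈ coinv k C P ρ ∧
      w = (p * b) ⊗ₜ[k] q - p ⊗ₜ[k] (b * q)}

/-- The `ē`-coinvariants `X ⊆ C`. -/
noncomputable def Xsub (π : C →ₗ[k] D) (eb : D) : Submodule k C :=
  LinearMap.ker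
    ((LinearMap.lTensor C π ∘ₗ Coalgebra.comul (R := k) (A := C)) -
      (TensorProduct.mk k C D).flip eb)

/-- The `ē`-coinvariants `A ⊆ P`. -/
noncomputable def Asub (ρ : P →ₗ[k] P ⊗[k] C) (π : C →ₗ[k] D) (eb : D) :
    Submodule k P :=
  LinearMap.ker ((LinearMap.lTensor P π ∘ₗ ρ) - (TensorProduct.mk k P D).flip eb)

/-- The cotensor product `P □_D X`, realised inside `P ⊗ C`. -/
noncomputable def cotenDX (ρ : P →ₗ[k] P ⊗[k] C) (π : C →ₗ[k] D) (eb : D) :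
    Submodule k (P ⊗[k] C) :=
  LinearMap.range (LinearMap.lTensor P (Xsub k C D π eb).subtype) ⊓
    LinearMap.ker
      (((TensorProduct.assoc k P D C).toLinearMap ∘ₗ
          LinearMap.rTensor C (LinearMap.lTensor P π ∘ₗ ρ)) -
        LinearMap.lTensor P
          (LinearMap.rTensor C π ∘ₗ Coalgebra.comul (R := k) (A := C)))

/-- The kernel of `A ⊗ₖ A → A ⊗_B A`. -/
noncomputable def galRelAA (ρ : P →ₗ[k] P ⊗[k] C) (π : C →ₗ[k] D) (eb : D) :
    Submodule k (P ⊗[k] P) :=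
  Submodule.span k
    {w : P ⊗[k] P | ∃ a ∈ Asub k C D P ρ π eb, ∃ b ∈ coinv k C P ρ,
      ∃ a' ∈ Asub k C D P ρ π eb, w = (a * b) ⊗ₜ[k] a' - a ⊗ₜ[k] (b * a')}

/-!
Let `G = (id ⊗ π) ∘ ρ - (· ⊗ ē) : P → P ⊗ D`, so that `A = ker G`, and let `P` act on `P ⊗ D` by
`(x ⊗ d) · p = x p₍₀₎ ⊗ d · p₍₁₎`. Then `(x ⊗ ē) · q = x · (id ⊗ π) ρ(q)`, so `(id ⊗ π) ∘ ρ` is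
right `P`-linear and `G (p b) = G p · b` for `b ∈ B`; coassociativity of `ρ` makes `can`
colinear. These give `can (A ⊗ A) ⊆ P □_D X`.

The strong connection `σ` yields `Θ (p ⊗ q) = p σ(q)`, which kills the `B`-balanced relations
and satisfies `can ∘ Θ = can`; by colinearity, `σ` maps `A` into `(B ⊗ P) ∩ (P ⊗ A) = B ⊗ A`.
For `u ∈ P □_D X` lift `u = can w` and show `Θ w ∈ (A ⊗ P) ∩ (P ⊗ A) = A ⊗ A`: the right
factor by colinearity of `σ`, the left one because `(G ⊗ id) w` lies in the kernel of the
canonical map of the `P`-module `P ⊗ D`, which, `can` being bijective, consists of balanced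
relations. Finally, if `can w = 0` for `w ∈ span (A ⊗ A)`, then `Θ w = 0`, while `w - Θ w` is an
`A`-balanced relation.
-/

section TensorSubmodule

variable {R M N Q : Type*} [CommRing R] [AddCommGroup M] [Module R M] [AddCommGroup N]
  [Module R N] [AddCommGroup Q] [Module R Q]

theorem LinearMap.ker_lTensor_eq_range_lTensor_subtype [Module.Flat R M] (g : N →ₗ[R] Q) :
    LinearMap.ker (g.lTensor M) = LinearMap.range ((LinearMap.ker g).subtype.lTensor M) :=
  LinearMap.exact_iff.mp (Module.Flat.lTensor_exact M (LinearMap.exact_subtype_ker_map g))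

theorem LinearMap.ker_rTensor_eq_range_rTensor_subtype [Module.Flat R M] (g : N →ₗ[R] Q) :
    LinearMap.ker (g.rTensor M) = LinearMap.range ((LinearMap.ker g).subtype.rTensor M) :=
  LinearMap.exact_iff.mp (Module.Flat.rTensor_exact M (LinearMap.exact_subtype_ker_map g))

theorem LinearMap.rTensor_eq_zero_of_ker_le_ker {N' : Type*} [AddCommGroup N'] [Module R N']
    [Module.Flat R Q] {f : M →ₗ[R] N} {g : M →ₗ[R] N'} (hfg : LinearMap.ker f ≤ LinearMap.ker g)
    {x : M ⊗[R] Q} (hx : f.rTensor Q x = 0) : g.rTensor Q x = 0 := by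
  obtain ⟨y, rfl⟩ : x ∈ LinearMap.range ((LinearMap.ker f).subtype.rTensor Q) := by
    rw [← LinearMap.ker_rTensor_eq_range_rTensor_subtype]; exact hx
  have hzero : g ∘ₗ (LinearMap.ker f).subtype = 0 := by
    ext z; exact hfg z.2
  rw [← LinearMap.rTensor_comp_apply, hzero, LinearMap.rTensor_zero, LinearMap.zero_apply]

theorem TensorProduct.mem_span_tmul_of_mem_range_rTensor_of_mem_range_lTensor
    (U : Submodule R M) (V : Submodule R N) [Module.Flat R (N ⧸ V)] {w : M ⊗[R] N}
    (hU : w ∈ LinearMap.range (U.subtype.rTensor N))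
    (hV : w ∈ LinearMap.range (V.subtype.lTensor M)) :
    w ∈ Submodule.span R {x | ∃ u ∈ U, ∃ v ∈ V, x = u ⊗ₜ v} := by
  obtain ⟨y, rfl⟩ := hU
  have hy : V.mkQ.lTensor U y = 0 := by
    apply Module.Flat.rTensor_preserves_injective_linearMap U.subtype U.injective_subtype
    have hw : V.mkQ.lTensor M (U.subtype.rTensor N y) = 0 := by
      rw [← LinearMap.mem_ker, lTensor_mkQ]; exact hV
    rw [map_zero, ← hw, ← LinearMap.comp_apply, ← LinearMap.comp_apply,
      LinearMap.rTensor_comp_lTensor, LinearMap.lTensor_comp_rTensor]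
  obtain ⟨z, rfl⟩ : y ∈ LinearMap.range (V.subtype.lTensor U) := by
    rw [← lTensor_mkQ]; exact hy
  rw [← LinearMap.comp_apply, LinearMap.rTensor_comp_lTensor]
  have hz := LinearMap.mem_range_self (TensorProduct.map U.subtype V.subtype) z
  rw [TensorProduct.range_map_eq_span_tmul] at hz
  refine Submodule.span_mono ?_ hz
  rintro _ ⟨u, v, rfl⟩
  exact ⟨u, u.2, v, v.2, rfl⟩

end TensorSubmodule

section RightAction

variable {R A B Y Z : Type*} [CommRing R] [Ring A] [Algebra R A] [Ring B] [Algebra R B]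
  [AddCommGroup Y] [Module R Y] [AddCommGroup Z] [Module R Z]

structure IsRightAction (m : Y ⊗[R] A →ₗ[R] Y) : Prop where
  act_mul : ∀ (y : Y) (a a' : A), m (m (y ⊗ₜ a) ⊗ₜ a') = m (y ⊗ₜ (a * a'))
  act_one : ∀ y : Y, m (y ⊗ₜ 1) = y

theorem isRightAction_mul' : IsRightAction (LinearMap.mul' R A) where
  act_mul y a a' := by simp [mul_assoc]
  act_one y := by simp

noncomputable def tensorAct (m : Y ⊗[R] A →ₗ[R] Y) (n : Z ⊗[R] B →ₗ[R] Z) :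
    (Y ⊗[R] Z) ⊗[R] (A ⊗[R] B) →ₗ[R] Y ⊗[R] Z :=
  TensorProduct.map m n ∘ₗ (TensorProduct.tensorTensorTensorComm R Y Z A B).toLinearMap

theorem tensorAct_tmul (m : Y ⊗[R] A →ₗ[R] Y) (n : Z ⊗[R] B →ₗ[R] Z) (y : Y) (z : Z) (a : A)
    (b : B) : tensorAct m n ((y ⊗ₜ z) ⊗ₜ (a ⊗ₜ b)) = m (y ⊗ₜ a) ⊗ₜ n (z ⊗ₜ b) := rfl

theorem IsRightAction.tensor {m : Y ⊗[R] A →ₗ[R] Y} {n : Z ⊗[R] B →ₗ[R] Z}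
    (hm : IsRightAction m) (hn : IsRightAction n) : IsRightAction (tensorAct m n) where
  act_mul w u v := by
    induction w using TensorProduct.induction_on with
    | zero => simp
    | add w₁ w₂ h₁ h₂ => simp only [add_tmul, map_add, h₁, h₂]
    | tmul y z =>
      induction u using TensorProduct.induction_on with
      | zero => simp
      | add u₁ u₂ h₁ h₂ => simp only [tmul_add, add_mul, map_add, add_tmul, h₁, h₂]
      | tmul a b =>
        induction v using TensorProduct.induction_on with
        | zero => simp
        | add v₁ v₂ h₁ h₂ => simp only [tmul_add, mul_add, map_add, h₁, h₂]
        | tmul a' b' =>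
          simp only [tensorAct_tmul, Algebra.TensorProduct.tmul_mul_tmul, hm.act_mul, hn.act_mul]
  act_one w := by
    induction w using TensorProduct.induction_on with
    | zero => simp
    | add w₁ w₂ h₁ h₂ => simp only [add_tmul, map_add, h₁, h₂]
    | tmul y z => rw [Algebra.TensorProduct.one_def, tensorAct_tmul, hm.act_one, hn.act_one]

theorem IsRightAction.comp_lTensor {m : Y ⊗[R] B →ₗ[R] Y} (hm : IsRightAction m)
    (f : A →ₐ[R] B) : IsRightAction (m ∘ₗ f.toLinearMap.lTensor Y) where
  act_mul y a a' := by simp [hm.act_mul]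
  act_one y := by simp [hm.act_one]

end RightAction

section CanonicalMap

variable {R A Y M N : Type*} [CommRing R] [Ring A] [Algebra R A] [AddCommGroup Y] [Module R Y]
  [AddCommGroup M] [Module R M] [AddCommGroup N] [Module R N]

/-- `y ⊗ x ↦ y · f(x)`. -/
noncomputable def canMapOf (m : Y ⊗[R] A →ₗ[R] Y) (f : M →ₗ[R] A ⊗[R] N) :
    Y ⊗[R] M →ₗ[R] Y ⊗[R] N :=
  m.rTensor N ∘ₗ (TensorProduct.assoc R Y A N).symm.toLinearMap ∘ₗ f.lTensor Y

theorem canMapOf_tmul (m : Y ⊗[R] A →ₗ[R] Y) (f : M →ₗ[R] A ⊗[R] N) (y : Y) (x : M) :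
    canMapOf m f (y ⊗ₜ x) = (m ∘ₗ TensorProduct.mk R Y A y).rTensor N (f x) := by
  simp only [canMapOf, LinearMap.comp_apply, LinearMap.lTensor_tmul, LinearEquiv.coe_coe]
  induction f x using TensorProduct.induction_on with
  | zero => simp
  | tmul a n => simp
  | add u v hu hv => simp only [tmul_add, map_add, hu, hv]

theorem mul'_comp_mk (a : A) : LinearMap.mul' R A ∘ₗ TensorProduct.mk R A A a =
    LinearMap.mulLeft R a := by
  ext; simp

theorem canMapOf_one_tmul (f : M →ₗ[R] A ⊗[R] N) (x : M) :
    canMapOf (LinearMap.mul' R A) f (1 ⊗ₜ x) = f x := by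
  rw [canMapOf_tmul, mul'_comp_mk, LinearMap.mulLeft_one, LinearMap.rTensor_id_apply]

/-- The `B`-balanced relations of `Y ⊗ A`, i.e. the kernel of `Y ⊗ A → Y ⊗_B A`. -/
def balancedRel (m : Y ⊗[R] A →ₗ[R] Y) (B : Set A) : Submodule R (Y ⊗[R] A) :=
  Submodule.span R {v | ∃ (y : Y), ∃ b ∈ B, ∃ a : A, v = m (y ⊗ₜ b) ⊗ₜ a - y ⊗ₜ (b * a)}

theorem canMapOf_rTensor_of_mem_span {m : Y ⊗[R] A →ₗ[R] Y} {f : M →ₗ[R] A ⊗[R] N}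
    {S : Set A} (hf : ∀ x, f x ∈ Submodule.span R {w | ∃ s ∈ S, ∃ n : N, w = s ⊗ₜ n})
    {g : A →ₗ[R] Y} (hg : ∀ (a : A), ∀ s ∈ S, g (a * s) = m (g a ⊗ₜ s)) (z : A ⊗[R] M) :
    canMapOf m f (g.rTensor M z) = g.rTensor N (canMapOf (LinearMap.mul' R A) f z) := by
  induction z using TensorProduct.induction_on with
  | zero => simp
  | add z₁ z₂ h₁ h₂ => simp only [map_add, h₁, h₂]
  | tmul a x =>
    rw [LinearMap.rTensor_tmul, canMapOf_tmul, canMapOf_tmul, ← LinearMap.rTensor_comp_apply]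
    refine LinearMap.eqOn_span ?_ (hf x)
    rintro _ ⟨s, hs, n, rfl⟩
    simp [hg a s hs]

theorem canMapOf_rTensor {m : Y ⊗[R] A →ₗ[R] Y} (f : M →ₗ[R] A ⊗[R] N) {g : A →ₗ[R] Y}
    (hg : ∀ a a' : A, g (a * a') = m (g a ⊗ₜ a')) (z : A ⊗[R] M) :
    canMapOf m f (g.rTensor M z) = g.rTensor N (canMapOf (LinearMap.mul' R A) f z) := by
  refine canMapOf_rTensor_of_mem_span (S := Set.univ) (fun x => ?_) (fun a s _ => hg a s) z
  refine Submodule.span_mono ?_ (TensorProduct.span_tmul_eq_top R A N ▸ Submodule.mem_top)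
  rintro _ ⟨a, n, rfl⟩
  exact ⟨a, trivial, n, rfl⟩

theorem act_comp_mk_mul {m : Y ⊗[R] A →ₗ[R] Y}
    (hm : ∀ (y : Y) (a a' : A), m (m (y ⊗ₜ a) ⊗ₜ a') = m (y ⊗ₜ (a * a'))) (y : Y) (a a' : A) :
    (m ∘ₗ TensorProduct.mk R Y A y) (a * a') = m ((m ∘ₗ TensorProduct.mk R Y A y) a ⊗ₜ a') := by
  simp [hm]

theorem balancedRel_le_comap_rTensor {m : Y ⊗[R] A →ₗ[R] Y}
    (hm : ∀ (y : Y) (a a' : A), m (m (y ⊗ₜ a) ⊗ₜ a') = m (y ⊗ₜ (a * a'))) (B : Set A) (y : Y) :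
    balancedRel (LinearMap.mul' R A) B ≤
      (balancedRel m B).comap ((m ∘ₗ TensorProduct.mk R Y A y).rTensor A) := by
  refine Submodule.span_le.mpr ?_
  rintro _ ⟨a, b, hb, a', rfl⟩
  exact Submodule.subset_span ⟨m (y ⊗ₜ a), b, hb, a', by simp [hm]⟩

theorem balancedRel_le_ker_canMapOf {m : Y ⊗[R] A →ₗ[R] Y}
    (hm : ∀ (y : Y) (a a' : A), m (m (y ⊗ₜ a) ⊗ₜ a') = m (y ⊗ₜ (a * a'))) {B : Set A}
    {f : A →ₗ[R] A ⊗[R] N}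
    (hf : ∀ b ∈ B, ∀ a, f (b * a) = (LinearMap.mulLeft R b).rTensor N (f a)) :
    balancedRel m B ≤ LinearMap.ker (canMapOf m f) := by
  refine Submodule.span_le.mpr ?_
  rintro _ ⟨y, b, hb, a, rfl⟩
  rw [SetLike.mem_coe, LinearMap.mem_ker, map_sub, canMapOf_tmul, canMapOf_tmul, hf b hb a,
    ← LinearMap.rTensor_comp_apply, sub_eq_zero]
  congr 2
  ext a'
  simp [hm]

theorem canMapOf_mul'_canMapOf_mul' {C : Type*} [AddCommGroup C] [Module R C]
    {ρ : A →ₗ[R] A ⊗[R] C} {τ : C →ₗ[R] A ⊗[R] A}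
    (hτ : ∀ c, canMapOf (LinearMap.mul' R A) ρ (τ c) = 1 ⊗ₜ c) (z : A ⊗[R] C) :
    canMapOf (LinearMap.mul' R A) ρ (canMapOf (LinearMap.mul' R A) τ z) = z := by
  induction z using TensorProduct.induction_on with
  | zero => simp
  | add z₁ z₂ h₁ h₂ => simp only [map_add, h₁, h₂]
  | tmul a c =>
    rw [canMapOf_tmul, canMapOf_rTensor ρ (act_comp_mk_mul isRightAction_mul'.act_mul a), hτ]
    simp

theorem ker_canMapOf_le_balancedRel {C : Type*} [AddCommGroup C] [Module R C]
    {m : Y ⊗[R] A →ₗ[R] Y} (hm : IsRightAction m) {ρ : A →ₗ[R] A ⊗[R] C} {B : Set A}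
    (τ : C →ₗ[R] A ⊗[R] A) (hτ : ∀ c, canMapOf (LinearMap.mul' R A) ρ (τ c) = 1 ⊗ₜ c)
    (hker : LinearMap.ker (canMapOf (LinearMap.mul' R A) ρ) ≤ balancedRel (LinearMap.mul' R A) B) :
    LinearMap.ker (canMapOf m ρ) ≤ balancedRel m B := by
  have hretract : ∀ v, canMapOf m τ (canMapOf m ρ v) - v ∈ balancedRel m B := by
    intro v
    induction v using TensorProduct.induction_on with
    | zero => simp
    | add v₁ v₂ h₁ h₂ => simpa only [map_add, add_sub_add_comm] using add_mem h₁ h₂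
    | tmul y a =>
      have hya : y ⊗ₜ a = (m ∘ₗ TensorProduct.mk R Y A y).rTensor A (1 ⊗ₜ a) := by
        simp [hm.act_one]
      rw [canMapOf_tmul, canMapOf_rTensor τ (act_comp_mk_mul hm.act_mul y), hya, ← map_sub]
      refine balancedRel_le_comap_rTensor hm.act_mul B y (hker ?_)
      rw [LinearMap.mem_ker, map_sub, canMapOf_mul'_canMapOf_mul' hτ, canMapOf_one_tmul, sub_self]
  intro v hv
  simpa [LinearMap.mem_ker.mp hv] using hretract v

theorem canMapOf_mul'_sub_mem_span {σ : A →ₗ[R] A ⊗[R] A}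
    (hσ : ∀ a, LinearMap.mul' R A (σ a) = a) {B L S : Set A}
    (hσS : ∀ s ∈ S, σ s ∈ Submodule.span R {w | ∃ b ∈ B, ∃ s' ∈ S, w = b ⊗ₜ s'})
    {w : A ⊗[R] A} (hw : w ∈ Submodule.span R {w | ∃ l ∈ L, ∃ s ∈ S, w = l ⊗ₜ s}) :
    canMapOf (LinearMap.mul' R A) σ w - w ∈
      Submodule.span R {v | ∃ l ∈ L, ∃ b ∈ B, ∃ s ∈ S, v = (l * b) ⊗ₜ[R] s - l ⊗ₜ[R] (b * s)} := by
  set rel := Submodule.span R {v | ∃ l ∈ L, ∃ b ∈ B, ∃ s ∈ S, v = (l * b) ⊗ₜ[R] s - l ⊗ₜ[R] (b * s)}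
  have hgen : ∀ l ∈ L, Submodule.span R {w | ∃ b ∈ B, ∃ s ∈ S, w = b ⊗ₜ s} ≤ rel.comap
      ((LinearMap.mul' R A ∘ₗ TensorProduct.mk R A A l).rTensor A -
        TensorProduct.mk R A A l ∘ₗ LinearMap.mul' R A) := by
    intro l hl
    refine Submodule.span_le.mpr ?_
    rintro _ ⟨b, hb, s, hs, rfl⟩
    exact Submodule.subset_span ⟨l, hl, b, hb, s, hs, by simp⟩
  induction hw using Submodule.span_induction with
  | mem x hx =>
    obtain ⟨l, hl, s, hs, rfl⟩ := hx
    have h := hgen l hl (hσS s hs)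
    rwa [Submodule.mem_comap, LinearMap.sub_apply, LinearMap.comp_apply, hσ,
      TensorProduct.mk_apply, ← canMapOf_tmul] at h
  | zero => simp
  | add x y _ _ hx hy => simpa only [map_add, add_sub_add_comm] using add_mem hx hy
  | smul r x _ hx => simpa only [map_smul, smul_sub] using rel.smul_mem r hx

end CanonicalMap

section Colinear

variable {R Y A M N Z C D : Type*} [CommRing R] [Ring A] [Algebra R A] [AddCommGroup Y]
  [Module R Y] [AddCommGroup M] [Module R M] [AddCommGroup N] [Module R N] [AddCommGroup Z]
  [Module R Z] [AddCommGroup C] [Module R C] [AddCommGroup D] [Module R D]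

theorem TensorProduct.lTensor_flip_mk_apply (d : D) (w : Z ⊗[R] N) :
    ((TensorProduct.mk R N D).flip d).lTensor Z w = TensorProduct.assoc R Z N D (w ⊗ₜ d) := by
  induction w using TensorProduct.induction_on with
  | zero => simp
  | tmul z n => simp
  | add w₁ w₂ h₁ h₂ => simp [add_tmul, h₁, h₂]

theorem TensorProduct.assoc_symm_tmul_eq_rTensor (y : Y) (w : M ⊗[R] C) :
    (TensorProduct.assoc R Y M C).symm (y ⊗ₜ w) = (TensorProduct.mk R Y M y).rTensor C w := by
  induction w using TensorProduct.induction_on with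
  | zero => simp
  | tmul x c => simp
  | add w₁ w₂ h₁ h₂ => simp [tmul_add, h₁, h₂]

noncomputable def coinvMap (γ : M →ₗ[R] M ⊗[R] D) (d : D) : M →ₗ[R] M ⊗[R] D :=
  γ - (TensorProduct.mk R M D).flip d

def IsColinear (γM : M →ₗ[R] M ⊗[R] C) (γN : N →ₗ[R] N ⊗[R] C) (f : M →ₗ[R] Z ⊗[R] N) : Prop :=
  ∀ x, f.rTensor C (γM x) = (TensorProduct.assoc R Z N C).symm (γN.lTensor Z (f x))

theorem IsColinear.coinvMap {γM : M →ₗ[R] M ⊗[R] C} {γN : N →ₗ[R] N ⊗[R] C}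
    {f : M →ₗ[R] Z ⊗[R] N} (h : IsColinear γM γN f) (φ : C →ₗ[R] D) (d : D) :
    IsColinear (coinvMap (φ.lTensor M ∘ₗ γM) d) (coinvMap (φ.lTensor N ∘ₗ γN) d) f := by
  intro x
  rw [LinearEquiv.eq_symm_apply, eq_comm]
  have h' x : γN.lTensor Z (f x) = TensorProduct.assoc R Z N C (f.rTensor C (γM x)) :=
    ((LinearEquiv.eq_symm_apply _).mp (h x)).symm
  have hφ : (φ.lTensor N ∘ₗ γN).lTensor Z (f x) =
      TensorProduct.assoc R Z N D (f.rTensor D ((φ.lTensor M ∘ₗ γM) x)) := by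
    rw [LinearMap.lTensor_comp_apply, h' x, LinearMap.comp_apply]
    generalize γM x = X
    induction X using TensorProduct.induction_on with
    | zero => simp
    | add X₁ X₂ h₁ h₂ => simp only [map_add, h₁, h₂]
    | tmul x' c =>
      simp only [LinearMap.rTensor_tmul, LinearMap.lTensor_tmul]
      induction f x' using TensorProduct.induction_on with
      | zero => simp
      | add W₁ W₂ h₁ h₂ => simp only [add_tmul, map_add, h₁, h₂]
      | tmul z n => simp
  simp only [_root_.coinvMap, LinearMap.lTensor_sub, LinearMap.sub_apply, map_sub, hφ,
    LinearMap.flip_apply, TensorProduct.mk_apply, LinearMap.rTensor_tmul,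
    TensorProduct.lTensor_flip_mk_apply]

theorem IsColinear.canMapOf {γM : M →ₗ[R] M ⊗[R] C} {γN : N →ₗ[R] N ⊗[R] C}
    {f : M →ₗ[R] A ⊗[R] N} (h : IsColinear γM γN f) (m : Y ⊗[R] A →ₗ[R] Y) :
    IsColinear ((TensorProduct.assoc R Y M C).symm.toLinearMap ∘ₗ γM.lTensor Y) γN
      (_root_.canMapOf m f) := by
  intro w
  rw [LinearEquiv.eq_symm_apply, eq_comm]
  induction w using TensorProduct.induction_on with
  | zero => simp
  | add w₁ w₂ h₁ h₂ => simp only [map_add, h₁, h₂]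
  | tmul y x =>
    set g := m ∘ₗ TensorProduct.mk R Y A y
    have hcan : _root_.canMapOf m f ∘ₗ TensorProduct.mk R Y M y = g.rTensor N ∘ₗ f := by
      ext x'; exact canMapOf_tmul m f y x'
    rw [canMapOf_tmul]
    calc γN.lTensor Y (g.rTensor N (f x))
        = g.rTensor (N ⊗[R] C) (γN.lTensor A (f x)) := by
          rw [← LinearMap.comp_apply (γN.lTensor Y), LinearMap.lTensor_comp_rTensor,
            ← LinearMap.rTensor_comp_lTensor, LinearMap.comp_apply]
      _ = TensorProduct.assoc R Y N C ((g.rTensor N ∘ₗ f).rTensor C (γM x)) := by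
          rw [← (LinearEquiv.eq_symm_apply _).mp (h x), LinearMap.rTensor_tensor,
            LinearMap.rTensor_comp_apply]
          simp
      _ = _ := by
          rw [← hcan, LinearMap.comp_apply, LinearMap.lTensor_tmul,
            LinearEquiv.coe_coe, TensorProduct.assoc_symm_tmul_eq_rTensor,
            LinearMap.rTensor_comp_apply]

end Colinear

section StrongConnection

variable {k C D P : Type} [Field k] [AddCommGroup C] [Module k C] [AddCommGroup D] [Module k D]
  [Ring P] [Algebra k P]

theorem canMap_eq_canMapOf (ρ : P →ₗ[k] P ⊗[k] C) :
    canMap k C P ρ = canMapOf (LinearMap.mul' k P) ρ := rfl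

theorem galRel_eq_balancedRel (ρ : P →ₗ[k] P ⊗[k] C) :
    galRel k C P ρ = balancedRel (LinearMap.mul' k P) (coinv k C P ρ) := by
  simp only [galRel, balancedRel, LinearMap.mul'_apply]
  congr 1
  ext w
  exact ⟨fun ⟨p, q, b, hb, hw⟩ => ⟨p, b, hb, q, hw⟩, fun ⟨p, b, hb, q, hw⟩ => ⟨p, q, b, hb, hw⟩⟩

theorem Asub_eq_ker_coinvMap (ρ : P →ₗ[k] P ⊗[k] C) (π : C →ₗ[k] D) (eb : D) :
    Asub k C D P ρ π eb = LinearMap.ker (coinvMap (π.lTensor P ∘ₗ ρ) eb) := rfl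

theorem Xsub_eq_ker_coinvMap [Coalgebra k C] (π : C →ₗ[k] D) (eb : D) :
    Xsub k C D π eb = LinearMap.ker (coinvMap (π.lTensor C ∘ₗ Coalgebra.comul) eb) := rfl

def coinvSubmodule (ρ : P →ₗ[k] P ⊗[k] C) : Submodule k P where
  carrier := coinv k C P ρ
  add_mem' {b b'} hb hb' p := by
    have h : LinearMap.mulLeft k (b + b') = LinearMap.mulLeft k b + LinearMap.mulLeft k b' := by
      ext; simp [add_mul]
    simp [add_mul, hb p, hb' p, h]
  zero_mem' p := by simp
  smul_mem' r b hb p := by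
    have h : LinearMap.mulLeft k (r • b) = r • LinearMap.mulLeft k b := by ext; simp
    simp [hb p, h]

theorem canMap_canMapOf_mul' {ρ : P →ₗ[k] P ⊗[k] C} {σ : P →ₗ[k] P ⊗[k] P}
    (hσ : ∀ p, LinearMap.mul' k P (σ p) = p)
    (hσspan : ∀ p, σ p ∈ Submodule.span k {w | ∃ b ∈ coinv k C P ρ, ∃ q : P, w = b ⊗ₜ[k] q})
    (w : P ⊗[k] P) :
    canMap k C P ρ (canMapOf (LinearMap.mul' k P) σ w) = canMap k C P ρ w := by
  have hcanσ (p : P) : canMap k C P ρ (σ p) = ρ p := by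
    conv_rhs => rw [← hσ p]
    refine LinearMap.eqOn_span (f := canMap k C P ρ) (g := ρ ∘ₗ LinearMap.mul' k P) ?_ (hσspan p)
    rintro _ ⟨b, hb, q, rfl⟩
    simp [canMap_eq_canMapOf, canMapOf_tmul, mul'_comp_mk, hb q]
  induction w using TensorProduct.induction_on with
  | zero => simp
  | add w₁ w₂ h₁ h₂ => simp only [map_add, h₁, h₂]
  | tmul p q =>
    rw [canMap_eq_canMapOf, canMapOf_tmul, canMapOf_tmul,
      canMapOf_rTensor ρ (act_comp_mk_mul isRightAction_mul'.act_mul p), ← canMap_eq_canMapOf,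
      hcanσ]

theorem ker_canMap_le_ker_canMapOf {ρ : P →ₗ[k] P ⊗[k] C}
    (hker : LinearMap.ker (canMap k C P ρ) = galRel k C P ρ) {σ : P →ₗ[k] P ⊗[k] P}
    (hσB : ∀ b ∈ coinv k C P ρ, ∀ p, σ (b * p) = (LinearMap.mulLeft k b).rTensor P (σ p)) :
    LinearMap.ker (canMap k C P ρ) ≤ LinearMap.ker (canMapOf (LinearMap.mul' k P) σ) := by
  rw [hker, galRel_eq_balancedRel]
  exact balancedRel_le_ker_canMapOf isRightAction_mul'.act_mul hσB

theorem exists_translation {ρ : P →ₗ[k] P ⊗[k] C} (hsurj : Function.Surjective (canMap k C P ρ)) :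
    ∃ τ : C →ₗ[k] P ⊗[k] P, ∀ c, canMap k C P ρ (τ c) = 1 ⊗ₜ c := by
  obtain ⟨s, hs⟩ := (canMap k C P ρ).exists_rightInverse_of_surjective
    (LinearMap.range_eq_top.mpr hsurj)
  exact ⟨s ∘ₗ TensorProduct.mk k P C 1, fun c => LinearMap.congr_fun hs (1 ⊗ₜ c)⟩

theorem mem_span_coinv_tmul_of_mem_Asub {ρ : P →ₗ[k] P ⊗[k] C} {σ : P →ₗ[k] P ⊗[k] P}
    (hσspan : ∀ p, σ p ∈ Submodule.span k {w | ∃ b ∈ coinv k C P ρ, ∃ q : P, w = b ⊗ₜ[k] q})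
    (hσcol : IsColinear ρ ρ σ) (π : C →ₗ[k] D) (eb : D) {a : P}
    (ha : a ∈ Asub k C D P ρ π eb) :
    σ a ∈ Submodule.span k
      {w | ∃ b ∈ coinv k C P ρ, ∃ r ∈ Asub k C D P ρ π eb, w = b ⊗ₜ[k] r} := by
  refine TensorProduct.mem_span_tmul_of_mem_range_rTensor_of_mem_range_lTensor
    (coinvSubmodule ρ) _ ?_ ?_
  · refine Submodule.span_le.mpr ?_ (hσspan a)
    rintro _ ⟨b, hb, q, rfl⟩
    exact ⟨⟨b, hb⟩ ⊗ₜ q, rfl⟩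
  · rw [Asub_eq_ker_coinvMap, ← LinearMap.ker_lTensor_eq_range_lTensor_subtype,
      LinearMap.mem_ker, ← (TensorProduct.assoc k P P D).symm.map_eq_zero_iff,
      ← hσcol.coinvMap π eb a]
    rw [Asub_eq_ker_coinvMap, LinearMap.mem_ker] at ha
    simp [ha]

theorem canMap_eq_zero_iff_mem_galRelAA {ρ : P →ₗ[k] P ⊗[k] C}
    (hker : LinearMap.ker (canMap k C P ρ) = galRel k C P ρ) {σ : P →ₗ[k] P ⊗[k] P}
    (hσ : ∀ p, LinearMap.mul' k P (σ p) = p)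
    (hσspan : ∀ p, σ p ∈ Submodule.span k {w | ∃ b ∈ coinv k C P ρ, ∃ q : P, w = b ⊗ₜ[k] q})
    (hσB : ∀ b ∈ coinv k C P ρ, ∀ p, σ (b * p) = (LinearMap.mulLeft k b).rTensor P (σ p))
    (hσcol : IsColinear ρ ρ σ) (π : C →ₗ[k] D) (eb : D) {w : P ⊗[k] P}
    (hw : w ∈ Submodule.span k {w | ∃ a ∈ Asub k C D P ρ π eb, ∃ a' ∈ Asub k C D P ρ π eb,
      w = a ⊗ₜ[k] a'}) :
    canMap k C P ρ w = 0 ↔ w ∈ galRelAA k C D P ρ π eb := by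
  constructor
  · intro hw0
    have hθ : canMapOf (LinearMap.mul' k P) σ w = 0 := ker_canMap_le_ker_canMapOf hker hσB hw0
    have h := canMapOf_mul'_sub_mem_span hσ
      (fun a ha => mem_span_coinv_tmul_of_mem_Asub hσspan hσcol π eb ha) hw
    rw [hθ, zero_sub] at h
    exact neg_mem_iff.mp h
  · intro hw'
    rw [← LinearMap.mem_ker, hker]
    refine Submodule.span_mono ?_ hw'
    rintro _ ⟨a, -, b, hb, a', -, rfl⟩
    exact ⟨a, a', b, hb, rfl⟩

end StrongConnection

section Cotensor

variable {k C D P : Type} [Field k] [AddCommGroup C] [Module k C] [AddCommGroup D] [Module k D]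
  [Ring P] [Algebra k P] {ρ : P →ₗ[k] P ⊗[k] C} {m : (P ⊗[k] D) ⊗[k] P →ₗ[k] P ⊗[k] D}
  {π : C →ₗ[k] D} {e : C}

theorem lTensor_apply_mul_eq_act (hm : IsRightAction m)
    (hmē : ∀ x q : P, m ((x ⊗ₜ π e) ⊗ₜ q) = (LinearMap.mulLeft k x).rTensor D (π.lTensor P (ρ q)))
    (p q : P) : π.lTensor P (ρ (p * q)) = m (π.lTensor P (ρ p) ⊗ₜ q) := by
  have hγ (q : P) : π.lTensor P (ρ q) = m (((1 : P) ⊗ₜ π e) ⊗ₜ q) := by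
    rw [hmē, LinearMap.mulLeft_one, LinearMap.rTensor_id_apply]
  rw [hγ, hγ, hm.act_mul]

theorem coinvMap_mul_of_mem_coinv (hm : IsRightAction m)
    (hmē : ∀ x q : P, m ((x ⊗ₜ π e) ⊗ₜ q) = (LinearMap.mulLeft k x).rTensor D (π.lTensor P (ρ q)))
    (hρ1 : ρ 1 = 1 ⊗ₜ e) {b : P} (hb : b ∈ coinv k C P ρ) (p : P) :
    coinvMap (π.lTensor P ∘ₗ ρ) (π e) (p * b) =
      m (coinvMap (π.lTensor P ∘ₗ ρ) (π e) p ⊗ₜ b) := by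
  have hρb : ρ b = b ⊗ₜ e := by simpa [hρ1] using hb 1
  simp only [coinvMap, LinearMap.sub_apply, LinearMap.comp_apply, LinearMap.flip_apply,
    TensorProduct.mk_apply, sub_tmul, map_sub, lTensor_apply_mul_eq_act hm hmē, hmē, hρb]
  simp

theorem assoc_canMapOf_rTensor_flip_mk [Coalgebra k C] (hρ : IsColinear ρ Coalgebra.comul ρ)
    (hmē : ∀ x q : P, m ((x ⊗ₜ π e) ⊗ₜ q) = (LinearMap.mulLeft k x).rTensor D (π.lTensor P (ρ q)))
    (w : P ⊗[k] P) :
    TensorProduct.assoc k P D C (canMapOf m ρ (((TensorProduct.mk k P D).flip (π e)).rTensor P w)) =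
      (π.rTensor C ∘ₗ Coalgebra.comul).lTensor P (canMap k C P ρ w) := by
  induction w using TensorProduct.induction_on with
  | zero => simp
  | add w₁ w₂ h₁ h₂ => simp only [map_add, h₁, h₂]
  | tmul p q =>
    have hmp : m ∘ₗ TensorProduct.mk k (P ⊗[k] D) P (p ⊗ₜ π e) =
        ((LinearMap.mulLeft k p).rTensor D ∘ₗ π.lTensor P) ∘ₗ ρ := by
      ext q'; simp only [LinearMap.comp_apply, TensorProduct.mk_apply, hmē]
    rw [LinearMap.rTensor_tmul, LinearMap.flip_apply, TensorProduct.mk_apply, canMapOf_tmul, hmp,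
      LinearMap.rTensor_comp_apply, hρ q, canMap_eq_canMapOf, canMapOf_tmul]
    generalize ρ q = X
    induction X using TensorProduct.induction_on with
    | zero => simp
    | add X₁ X₂ h₁ h₂ => simp only [map_add, h₁, h₂]
    | tmul x c =>
      simp only [LinearMap.lTensor_tmul, LinearMap.rTensor_tmul, LinearMap.comp_apply]
      induction Coalgebra.comul (R := k) c using TensorProduct.induction_on with
      | zero => simp
      | add Y₁ Y₂ h₁ h₂ => simp only [tmul_add, map_add, h₁, h₂]
      | tmul c₁ c₂ => simp

theorem assoc_canMapOf_rTensor_coinvMap [Coalgebra k C] (hρ : IsColinear ρ Coalgebra.comul ρ)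
    (hm : IsRightAction m)
    (hmē : ∀ x q : P, m ((x ⊗ₜ π e) ⊗ₜ q) = (LinearMap.mulLeft k x).rTensor D (π.lTensor P (ρ q)))
    (w : P ⊗[k] P) :
    TensorProduct.assoc k P D C
        (canMapOf m ρ ((coinvMap (π.lTensor P ∘ₗ ρ) (π e)).rTensor P w)) =
      (((TensorProduct.assoc k P D C).toLinearMap ∘ₗ (π.lTensor P ∘ₗ ρ).rTensor C) -
        (π.rTensor C ∘ₗ Coalgebra.comul).lTensor P) (canMap k C P ρ w) := by
  have hsplit : (coinvMap (π.lTensor P ∘ₗ ρ) (π e)).rTensor P w =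
      (π.lTensor P ∘ₗ ρ).rTensor P w - ((TensorProduct.mk k P D).flip (π e)).rTensor P w := by
    -- `LinearMap.sub_apply` does not match the subtraction produced by `rTensor_sub`
    rw [coinvMap, LinearMap.rTensor_sub]
    rfl
  rw [hsplit, map_sub, map_sub, LinearMap.sub_apply, assoc_canMapOf_rTensor_flip_mk hρ hmē,
    canMapOf_rTensor ρ (lTensor_apply_mul_eq_act hm hmē)]
  rfl

theorem map_canMap_span_le_cotenDX [Coalgebra k C] (hρ : IsColinear ρ Coalgebra.comul ρ)
    (hm : IsRightAction m)
    (hmē : ∀ x q : P, m ((x ⊗ₜ π e) ⊗ₜ q) = (LinearMap.mulLeft k x).rTensor D (π.lTensor P (ρ q))) :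
    Submodule.map (canMap k C P ρ)
        (Submodule.span k {w : P ⊗[k] P | ∃ a ∈ Asub k C D P ρ π (π e),
          ∃ a' ∈ Asub k C D P ρ π (π e), w = a ⊗ₜ[k] a'}) ≤
      cotenDX k C D P ρ π (π e) := by
  rw [Submodule.map_span_le]
  rintro _ ⟨a, ha, a', ha', rfl⟩
  rw [Asub_eq_ker_coinvMap, LinearMap.mem_ker] at ha ha'
  refine Submodule.mem_inf.mpr ⟨?_, ?_⟩
  · rw [Xsub_eq_ker_coinvMap, ← LinearMap.ker_lTensor_eq_range_lTensor_subtype, LinearMap.mem_ker,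
      ← (TensorProduct.assoc k P C D).symm.map_eq_zero_iff, canMap_eq_canMapOf,
      ← (hρ.coinvMap π (π e)).canMapOf (LinearMap.mul' k P)]
    simp [ha']
  · rw [LinearMap.mem_ker, ← assoc_canMapOf_rTensor_coinvMap hρ hm hmē]
    simp [ha]

theorem cotenDX_le_map_canMap_span [Coalgebra k C] (hρ : IsColinear ρ Coalgebra.comul ρ)
    (hm : IsRightAction m)
    (hmē : ∀ x q : P, m ((x ⊗ₜ π e) ⊗ₜ q) = (LinearMap.mulLeft k x).rTensor D (π.lTensor P (ρ q)))
    (hρ1 : ρ 1 = 1 ⊗ₜ e) (hsurj : Function.Surjective (canMap k C P ρ))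
    (hker : LinearMap.ker (canMap k C P ρ) = galRel k C P ρ) {σ : P →ₗ[k] P ⊗[k] P}
    (hσ : ∀ p, LinearMap.mul' k P (σ p) = p)
    (hσspan : ∀ p, σ p ∈ Submodule.span k {w | ∃ b ∈ coinv k C P ρ, ∃ q : P, w = b ⊗ₜ[k] q})
    (hσB : ∀ b ∈ coinv k C P ρ, ∀ p, σ (b * p) = (LinearMap.mulLeft k b).rTensor P (σ p))
    (hσcol : IsColinear ρ ρ σ) :
    cotenDX k C D P ρ π (π e) ≤ Submodule.map (canMap k C P ρ)
        (Submodule.span k {w : P ⊗[k] P | ∃ a ∈ Asub k C D P ρ π (π e),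
          ∃ a' ∈ Asub k C D P ρ π (π e), w = a ⊗ₜ[k] a'}) := by
  intro u hu
  obtain ⟨hu₁, hu₂⟩ := Submodule.mem_inf.mp hu
  obtain ⟨τ, hτ⟩ := exists_translation hsurj
  set w₀ := canMapOf (LinearMap.mul' k P) τ u
  have hw₀ : canMap k C P ρ w₀ = u := canMapOf_mul'_canMapOf_mul' hτ u
  refine ⟨canMapOf (LinearMap.mul' k P) σ w₀, ?_, by rw [canMap_canMapOf_mul' hσ hσspan, hw₀]⟩
  refine TensorProduct.mem_span_tmul_of_mem_range_rTensor_of_mem_range_lTensor _ _ ?_ ?_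
  · rw [Asub_eq_ker_coinvMap, ← LinearMap.ker_rTensor_eq_range_rTensor_subtype, LinearMap.mem_ker,
      ← canMapOf_rTensor_of_mem_span hσspan
        (fun p b hb => coinvMap_mul_of_mem_coinv hm hmē hρ1 hb p)]
    refine balancedRel_le_ker_canMapOf hm.act_mul hσB (ker_canMapOf_le_balancedRel hm τ hτ ?_ ?_)
    · exact (hker.trans (galRel_eq_balancedRel ρ)).le
    · rw [LinearMap.mem_ker, ← (TensorProduct.assoc k P D C).map_eq_zero_iff,
        assoc_canMapOf_rTensor_coinvMap hρ hm hmē, hw₀]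
      exact hu₂
  · rw [Asub_eq_ker_coinvMap, ← LinearMap.ker_lTensor_eq_range_lTensor_subtype, LinearMap.mem_ker,
      ← (TensorProduct.assoc k P P D).symm.map_eq_zero_iff,
      ← (hσcol.coinvMap π (π e)).canMapOf (LinearMap.mul' k P) w₀]
    refine LinearMap.rTensor_eq_zero_of_ker_le_ker (ker_canMap_le_ker_canMapOf hker hσB) ?_
    rw [canMap_eq_canMapOf, (hρ.coinvMap π (π e)).canMapOf (LinearMap.mul' k P) w₀,
      ← canMap_eq_canMapOf, hw₀, LinearEquiv.map_eq_zero_iff, ← LinearMap.mem_ker,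
      LinearMap.ker_lTensor_eq_range_lTensor_subtype, ← Xsub_eq_ker_coinvMap]
    exact hu₁

end Cotensor

section DoiKoppinen

variable {k H C D P : Type*} [CommRing k] [AddCommGroup C] [Module k C] [AddCommGroup D]
  [Module k D] [Ring P] [Algebra k P]

/-- `(x ⊗ d) · p = x p₍₀₎ ⊗ d · p₍₁₎`, where `δ p = p₍₀₎ ⊗ p₍₁₎`. -/
noncomputable def diagAct [Ring H] [Algebra k H] (δ : P →ₗ[k] P ⊗[k] H)
    (actD : D ⊗[k] H →ₗ[k] D) : (P ⊗[k] D) ⊗[k] P →ₗ[k] P ⊗[k] D :=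
  tensorAct (LinearMap.mul' k P) actD ∘ₗ δ.lTensor (P ⊗[k] D)

theorem isRightAction_diagAct [Ring H] [Algebra k H] {δ : P →ₗ[k] P ⊗[k] H}
    (hδmul : ∀ p q : P, δ (p * q) = δ p * δ q) (hδone : δ 1 = 1) {actD : D ⊗[k] H →ₗ[k] D}
    (hactD : IsRightAction actD) : IsRightAction (diagAct δ actD) :=
  (isRightAction_mul'.tensor hactD).comp_lTensor (AlgHom.ofLinearMap δ hδone hδmul)

theorem diagAct_tmul_tmul [Ring H] [Algebra k H] {δ : P →ₗ[k] P ⊗[k] H}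
    {act : C ⊗[k] H →ₗ[k] C} {actD : D ⊗[k] H →ₗ[k] D} {π : C →ₗ[k] D}
    (hπH : ∀ (c : C) (h : H), π (act (c ⊗ₜ h)) = actD (π c ⊗ₜ h)) {e : C}
    {ρ : P →ₗ[k] P ⊗[k] C} (hρ : ρ = (act ∘ₗ TensorProduct.mk k C H e).lTensor P ∘ₗ δ) (x q : P) :
    diagAct δ actD ((x ⊗ₜ π e) ⊗ₜ q) = (LinearMap.mulLeft k x).rTensor D (π.lTensor P (ρ q)) := by
  simp only [diagAct, hρ, LinearMap.comp_apply, LinearMap.lTensor_tmul]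
  generalize δ q = X
  induction X using TensorProduct.induction_on with
  | zero => simp
  | add X₁ X₂ h₁ h₂ => simp only [tmul_add, map_add, h₁, h₂]
  | tmul p h => simp [tensorAct_tmul, hπH]

theorem apply_one_eq_one_tmul [Ring H] [Algebra k H] {δ : P →ₗ[k] P ⊗[k] H} (hδone : δ 1 = 1)
    {act : C ⊗[k] H →ₗ[k] C} (hact_one : ∀ c : C, act (c ⊗ₜ (1 : H)) = c) {e : C}
    {ρ : P →ₗ[k] P ⊗[k] C} (hρ : ρ = (act ∘ₗ TensorProduct.mk k C H e).lTensor P ∘ₗ δ) :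
    ρ 1 = 1 ⊗ₜ e := by
  simp [hρ, hδone, Algebra.TensorProduct.one_def, hact_one]

theorem isColinear_comul [AddCommMonoid H] [Module k H] [Coalgebra k H] [Coalgebra k C]
    {δ : P →ₗ[k] P ⊗[k] H}
    (hδcoassoc : ∀ p : P, TensorProduct.assoc k P H H (δ.rTensor H (δ p)) =
      Coalgebra.comul.lTensor P (δ p))
    {act : C ⊗[k] H →ₗ[k] C}
    (hact_comul : ∀ (c : C) (h : H), Coalgebra.comul (R := k) (act (c ⊗ₜ h)) =
      TensorProduct.map act act (TensorProduct.tensorTensorTensorComm k C C H H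
        (Coalgebra.comul c ⊗ₜ Coalgebra.comul h)))
    {e : C} (he_comul : Coalgebra.comul (R := k) e = e ⊗ₜ e)
    {ρ : P →ₗ[k] P ⊗[k] C} (hρ : ρ = (act ∘ₗ TensorProduct.mk k C H e).lTensor P ∘ₗ δ) :
    IsColinear ρ Coalgebra.comul ρ := by
  set a := act ∘ₗ TensorProduct.mk k C H e
  have ha : Coalgebra.comul ∘ₗ a = TensorProduct.map a a ∘ₗ Coalgebra.comul := by
    ext h
    simp only [a, LinearMap.comp_apply, TensorProduct.mk_apply, hact_comul, he_comul]
    induction Coalgebra.comul (R := k) h using TensorProduct.induction_on with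
    | zero => simp
    | add Y₁ Y₂ h₁ h₂ => simp only [tmul_add, map_add, h₁, h₂]
    | tmul h₁ h₂ => simp
  intro x
  have hδ := (LinearEquiv.eq_symm_apply _).mpr (hδcoassoc x)
  subst hρ
  calc (a.lTensor P ∘ₗ δ).rTensor C ((a.lTensor P ∘ₗ δ) x)
      = TensorProduct.map (a.lTensor P) a (δ.rTensor H (δ x)) := by
        rw [LinearMap.comp_apply]
        generalize δ x = X
        induction X using TensorProduct.induction_on with
        | zero => simp
        | add X₁ X₂ h₁ h₂ => simp only [map_add, h₁, h₂]
        | tmul p h => simp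
    _ = (TensorProduct.assoc k P C C).symm
          ((TensorProduct.map a a ∘ₗ Coalgebra.comul).lTensor P (δ x)) := by
        rw [hδ, LinearMap.lTensor_comp_apply]
        generalize Coalgebra.comul.lTensor P (δ x) = Y
        induction Y using TensorProduct.induction_on with
        | zero => simp
        | add Y₁ Y₂ h₁ h₂ => simp only [map_add, h₁, h₂]
        | tmul p z =>
          induction z using TensorProduct.induction_on with
          | zero => simp
          | add z₁ z₂ h₁ h₂ => simp only [tmul_add, map_add, h₁, h₂]
          | tmul h₁ h₂ => simp
    _ = _ := by rw [← ha, LinearMap.lTensor_comp_apply, LinearMap.comp_apply]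

end DoiKoppinen

theorem stmt15
    (δ : P →ₗ[k] P ⊗[k] H)
    (hδmul : ∀ p q : P, δ (p * q) = δ p * δ q) (hδone : δ 1 = 1)
    (hδcoassoc : ∀ p : P,
      TensorProduct.assoc k P H H (LinearMap.rTensor H δ (δ p)) =
        LinearMap.lTensor P (Coalgebra.comul (R := k) (A := H)) (δ p))
    (act : C ⊗[k] H →ₗ[k] C)
    (hact_one : ∀ c : C, act (c ⊗ₜ[k] (1 : H)) = c)
    (hact_comul : ∀ (c : C) (h : H),
      Coalgebra.comul (R := k) (act (c ⊗ₜ[k] h)) =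
        TensorProduct.map act act
          (TensorProduct.tensorTensorTensorComm k C C H H
            ((Coalgebra.comul (R := k) c) ⊗ₜ[k] (Coalgebra.comul (R := k) h))))
    (actD : D ⊗[k] H →ₗ[k] D)
    (hactD_one : ∀ d : D, actD (d ⊗ₜ[k] (1 : H)) = d)
    (hactD_mul : ∀ (d : D) (h h' : H),
      actD (actD (d ⊗ₜ[k] h) ⊗ₜ[k] h') = actD (d ⊗ₜ[k] (h * h')))
    (π : C →ₗ[k] D)
    (hπH : ∀ (c : C) (h : H), π (act (c ⊗ₜ[k] h)) = actD ((π c) ⊗ₜ[k] h))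
    (e : C)
    (he_comul : Coalgebra.comul (R := k) e = e ⊗ₜ[k] e)
    -- the right `C`-coaction `ρ(p) = Σ p₍₀₎ ⊗ e·p₍₁₎`
    (ρ : P →ₗ[k] P ⊗[k] C)
    (hρ : ρ = LinearMap.lTensor P (act ∘ₗ TensorProduct.mk k C H e) ∘ₗ δ)
    -- the extension `B ⊆ P` is a principal coalgebra extension:
    (hsurj : Function.Surjective (canMap k C P ρ))
    (hker : LinearMap.ker (canMap k C P ρ) = galRel k C P ρ)
    (hproj : ∃ σ : P →ₗ[k] P ⊗[k] P,
      (∀ p : P, LinearMap.mul' k P (σ p) = p) ∧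
      (∀ p : P, σ p ∈
        Submodule.span k {w : P ⊗[k] P | ∃ b ∈ coinv k C P ρ, ∃ q : P, w = b ⊗ₜ[k] q}) ∧
      (∀ b ∈ coinv k C P ρ, ∀ p : P,
        σ (b * p) = LinearMap.rTensor P (LinearMap.mulLeft k b) (σ p)) ∧
      (∀ p : P,
        LinearMap.rTensor C σ (ρ p) =
          (TensorProduct.assoc k P P C).symm (LinearMap.lTensor P ρ (σ p)))) :
    Submodule.map (canMap k C P ρ)
        (Submodule.span k {w : P ⊗[k] P | ∃ a ∈ Asub k C D P ρ π (π e),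
          ∃ a' ∈ Asub k C D P ρ π (π e), w = a ⊗ₜ[k] a'}) =
      cotenDX k C D P ρ π (π e) ∧
    (∀ w ∈ Submodule.span k {w : P ⊗[k] P | ∃ a ∈ Asub k C D P ρ π (π e),
          ∃ a' ∈ Asub k C D P ρ π (π e), w = a ⊗ₜ[k] a'},
      (canMap k C P ρ w = 0 ↔ w ∈ galRelAA k C D P ρ π (π e))) := by
  obtain ⟨σ, hσ, hσspan, hσB, hσcol⟩ := hproj
  have hm := isRightAction_diagAct hδmul hδone ⟨hactD_mul, hactD_one⟩
  have hmē := diagAct_tmul_tmul hπH hρ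
  have hρco := isColinear_comul hδcoassoc hact_comul he_comul hρ
  have hρ1 := apply_one_eq_one_tmul hδone hact_one hρ
  exact ⟨le_antisymm (map_canMap_span_le_cotenDX hρco hm hmē)
      (cotenDX_le_map_canMap_span hρco hm hmē hρ1 hsurj hker hσ hσspan hσB hσcol),
    fun w hw => canMap_eq_zero_iff_mem_galRelAA hker hσ hσspan hσB hσcol π (π e) hw⟩
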